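/- arXiv:1909.07262 — 5 statements merged into one kernel-verified Lean document; each statement's English description precedes it below -/
import Mathlib

section
/- Let G be a group and g ∈ G an element of finite order n. Let i be an integer with 1 < i < n − 1 and gcd(i, n) = 1, and let φ denote Euler's totient function (so that n divides 1 − i^{φ(n)}). Then the Bass cyclic unit u = (1 + g + g² + ⋯ + g^{i−1})^{φ(n)} + ((1 − i^{φ(n)})/n) · ĝ, where ĝ = 1 + g + g² + ⋯ + g^{n−1} and (1 − i^{φ(n)})/n is the integer quotient, is a unit of the integral group ring ℤG. -/
open Finset

private lemma bass_sum_pow_mul {R : Type*} [Ring R] (a : R) (m m' : ℕ) :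
    (∑ t ∈ range m, a ^ t) * (∑ t ∈ range m', (a ^ m) ^ t)
      = ∑ t ∈ range (m * m'), a ^ t := by
  induction m' with
  | zero => simp
  | succ m' ih =>
    rw [Finset.sum_range_succ, mul_add, ih, Nat.mul_succ, Finset.sum_range_add,
      Finset.sum_mul]
    congr 1
    refine Finset.sum_congr rfl fun t ht => ?_
    rw [← pow_mul, ← pow_add, Nat.add_comm]

private lemma bass_ghat_mul_a {R : Type*} [Ring R] (a : R) (N : ℕ)
    (hN : a ^ N = 1) (h0 : 0 < N) :
    (∑ t ∈ range N, a ^ t) * a = ∑ t ∈ range N, a ^ t := by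
  obtain ⟨M, rfl⟩ := Nat.exists_eq_succ_of_ne_zero h0.ne'
  rw [Finset.sum_mul]
  have h1 : ∀ t, a ^ t * a = a ^ (t + 1) := fun t => (pow_succ a t).symm
  simp only [h1]
  rw [Finset.sum_range_succ, Finset.sum_range_succ' (fun t => a ^ t), hN, pow_zero]

private lemma bass_ghat_mul_pow {R : Type*} [Ring R] (a : R) (N : ℕ)
    (hN : a ^ N = 1) (h0 : 0 < N) (k : ℕ) :
    (∑ t ∈ range N, a ^ t) * a ^ k = ∑ t ∈ range N, a ^ t := by
  induction k with
  | zero => simp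
  | succ k ih => rw [pow_succ, ← mul_assoc, ih, bass_ghat_mul_a a N hN h0]

private lemma bass_ghat_mul_sum {R : Type*} [Ring R] (a : R) (N : ℕ)
    (hN : a ^ N = 1) (h0 : 0 < N) (m : ℕ) (f : ℕ → ℕ) :
    (∑ t ∈ range N, a ^ t) * (∑ t ∈ range m, a ^ (f t))
      = (m : ℤ) • ∑ t ∈ range N, a ^ t := by
  rw [Finset.mul_sum]
  simp only [bass_ghat_mul_pow a N hN h0]
  rw [Finset.sum_const, Finset.card_range, natCast_zsmul]

private lemma bass_ghat_mul_pow_elem {R : Type*} [Ring R] (gh x : R) (c : ℤ)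
    (h : gh * x = c • gh) (e : ℕ) : gh * x ^ e = (c ^ e) • gh := by
  induction e with
  | zero => simp
  | succ e ih =>
    rw [pow_succ, ← mul_assoc, ih, smul_mul_assoc, h, smul_smul, ← pow_succ]

private lemma bass_pow_one_add {R : Type*} [Ring R] (gh : R) (N : ℕ)
    (hgh : gh * gh = (N : ℤ) • gh) (k : ℤ) (m : ℕ) :
    ∃ c : ℤ, (1 + k • gh) ^ m = 1 + c • gh ∧ (1 + k * N) ^ m = 1 + c * N := by
  induction m with
  | zero => exact ⟨0, by simp⟩
  | succ m ih =>
    obtain ⟨c, h1, h2⟩ := ih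
    refine ⟨c + k + c * k * N, ?_, ?_⟩
    · rw [pow_succ, h1]
      simp only [mul_add, add_mul, one_mul, mul_one, mul_smul_comm,
        smul_mul_assoc, smul_smul, hgh]
      module
    · rw [pow_succ, h2]
      ring

/-- Let `G` be a group and `g ∈ G` an element of finite order
`n`. Let `i` be an integer with `1 < i < n − 1` and `gcd(i, n) = 1`, and let
`φ` denote Euler's totient function. Then the Bass cyclic unit
`u = (1 + g + g² + ⋯ + g^{i−1})^{φ(n)} + ((1 − i^{φ(n)})/n) · ĝ`,
where `ĝ = 1 + g + g² + ⋯ + g^{n−1}` and `(1 − i^{φ(n)})/n` is the integer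
quotient, is a unit of the integral group ring `ℤG`. -/
theorem bass_cyclic_is_unit {G : Type*} [Group G]
    (g : G) (n i : ℕ) (hn : orderOf g = n)
    (hi₁ : 1 < i) (hi₂ : i < n - 1) (hgcd : Nat.gcd i n = 1)
    (hdvd : (n : ℤ) ∣ 1 - (i : ℤ) ^ n.totient)
    (ghat : MonoidAlgebra ℤ G)
    (hghat : ghat = ∑ j ∈ Finset.range n, (MonoidAlgebra.of ℤ G g) ^ j)
    (u : MonoidAlgebra ℤ G)
    (hu : u = (∑ j ∈ Finset.range i, (MonoidAlgebra.of ℤ G g) ^ j) ^ n.totient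
        + ((1 - (i : ℤ) ^ n.totient) / (n : ℤ)) • ghat) :
    IsUnit u := by
  have hn4 : 4 ≤ n := by omega
  have hnpos : 0 < n := by omega
  set φ := n.totient with hφdef
  have hφpos : 0 < φ := Nat.totient_pos.2 hnpos
  set a : MonoidAlgebra ℤ G := MonoidAlgebra.of ℤ G g with ha
  have han : a ^ n = 1 := by
    rw [ha, ← map_pow, ← hn, pow_orderOf_eq_one g, map_one]
  -- j and k
  set j : ℕ := i ^ (φ - 1) with hjdef
  have hij : i * j = i ^ φ := by
    rw [hjdef, ← pow_succ']
    congr 1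
    omega
  have hdvd' : (n : ℤ) ∣ ((i : ℤ) ^ φ - 1) := (dvd_sub_comm).1 hdvd
  have hipow1 : 1 ≤ i ^ φ := Nat.one_le_pow _ _ (by omega)
  have hndvdnat : n ∣ i ^ φ - 1 := by
    have : (n : ℤ) ∣ ((i ^ φ - 1 : ℕ) : ℤ) := by
      push_cast [hipow1]
      exact hdvd'
    exact_mod_cast this
  obtain ⟨k, hk⟩ := hndvdnat
  have hik : i * j = 1 + k * n := by rw [hij, Nat.mul_comm k n]; omega
  -- basic ghat facts
  have hg_mul_pow : ∀ m : ℕ, ghat * a ^ m = ghat := by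
    intro m; rw [hghat]; exact bass_ghat_mul_pow a n han hnpos m
  have hg_sq : ghat * ghat = (n : ℤ) • ghat := by
    rw [hghat]
    exact bass_ghat_mul_sum a n han hnpos n id
  set S : MonoidAlgebra ℤ G := ∑ t ∈ range i, a ^ t with hS
  set T : MonoidAlgebra ℤ G := ∑ t ∈ range j, (a ^ i) ^ t with hT
  have hgS : ghat * S = (i : ℤ) • ghat := by
    rw [hghat, hS]; exact bass_ghat_mul_sum a n han hnpos i id
  have hgT : ghat * T = (j : ℤ) • ghat := by
    rw [hghat, hT]
    simp only [← pow_mul]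
    exact bass_ghat_mul_sum a n han hnpos j (fun t => i * t)
  have hgSφ : ghat * S ^ φ = ((i : ℤ) ^ φ) • ghat :=
    bass_ghat_mul_pow_elem ghat S _ hgS φ
  have hgTφ : ghat * T ^ φ = ((j : ℤ) ^ φ) • ghat :=
    bass_ghat_mul_pow_elem ghat T _ hgT φ
  -- S * T = 1 + k • ghat
  have hST : S * T = 1 + (k : ℤ) • ghat := by
    rw [hS, hT, bass_sum_pow_mul a i j, hik, Finset.sum_range_add]
    congr 1
    · simp
    · have h1 : ∀ t : ℕ, a ^ (1 + t) = a ^ t * a := fun t => by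
        rw [Nat.add_comm, pow_succ]
      simp only [h1]
      rw [← Finset.sum_mul]
      have h2 : (∑ t ∈ range (k * n), a ^ t) = (k : ℤ) • ghat := by
        have h3 := bass_sum_pow_mul a n k
        simp only [han, one_pow, Finset.sum_const, Finset.card_range,
          nsmul_eq_mul, mul_one] at h3
        rw [Nat.mul_comm k n, ← h3, hghat, zsmul_eq_mul, Int.cast_natCast,
          (Nat.cast_commute k _).eq]
      rw [h2, smul_mul_assoc]
      congr 1
      have := hg_mul_pow 1
      rwa [pow_one] at this
  -- commutation facts
  have hcaa : ∀ p q : ℕ, Commute (a ^ p) (a ^ q) :=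
    fun p q => (Commute.refl a).pow_pow p q
  have hcST : Commute S T := by
    rw [hS, hT]
    refine Commute.sum_left _ _ _ fun p hp => Commute.sum_right _ _ _ fun q hq => ?_
    simpa only [← pow_mul] using hcaa p (i * q)
  have hcSg : Commute S ghat := by
    rw [hS, hghat]
    exact Commute.sum_left _ _ _ fun p hp =>
      Commute.sum_right _ _ _ fun q hq => hcaa p q
  have hcTg : Commute T ghat := by
    rw [hT, hghat]
    refine Commute.sum_left _ _ _ fun p hp => Commute.sum_right _ _ _ fun q hq => ?_
    simpa only [← pow_mul] using hcaa (i * p) q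
  -- the coefficients
  set α : ℤ := (1 - (i : ℤ) ^ φ) / (n : ℤ) with hαdef
  have hα : α * n = 1 - (i : ℤ) ^ φ := Int.ediv_mul_cancel hdvd
  have hdvdj : (n : ℤ) ∣ 1 - (j : ℤ) ^ φ := by
    refine dvd_trans hdvd ?_
    have : (j : ℤ) ^ φ = ((i : ℤ) ^ φ) ^ (φ - 1) := by
      rw [hjdef]
      push_cast
      rw [← pow_mul, ← pow_mul, Nat.mul_comm]
    rw [this]
    have := sub_dvd_pow_sub_pow (1 : ℤ) ((i : ℤ) ^ φ) (φ - 1)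
    simpa using this
  set β : ℤ := (1 - (j : ℤ) ^ φ) / (n : ℤ) with hβdef
  have hβ : β * n = 1 - (j : ℤ) ^ φ := Int.ediv_mul_cancel hdvdj
  -- (S*T)^φ = 1 + c • ghat
  obtain ⟨c, hc1, hc2⟩ := bass_pow_one_add ghat n hg_sq (k : ℤ) φ
  have hSTφ : S ^ φ * T ^ φ = 1 + c • ghat := by
    rw [← hcST.mul_pow, hST, hc1]
  have hc2' : (i : ℤ) ^ φ * (j : ℤ) ^ φ = 1 + c * n := by
    have : ((i * j : ℕ) : ℤ) = 1 + (k : ℤ) * n := by exact_mod_cast hik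
    calc (i : ℤ) ^ φ * (j : ℤ) ^ φ = ((i * j : ℕ) : ℤ) ^ φ := by push_cast; ring
    _ = (1 + (k : ℤ) * n) ^ φ := by rw [this]
    _ = 1 + c * n := hc2
  -- key coefficient identity
  have hcoeff : c + β * (i : ℤ) ^ φ + α * (j : ℤ) ^ φ + α * β * n = 0 := by
    have hn0 : (n : ℤ) ≠ 0 := by exact_mod_cast hnpos.ne'
    refine mul_left_cancel₀ hn0 ?_
    rw [mul_zero]
    have e2 : c * (n : ℤ) = (i : ℤ) ^ φ * (j : ℤ) ^ φ - 1 := by linarith [hc2']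
    calc (n : ℤ) * (c + β * (i : ℤ) ^ φ + α * (j : ℤ) ^ φ + α * β * (n : ℤ))
        = c * (n : ℤ) + (β * (n : ℤ)) * (i : ℤ) ^ φ + (α * (n : ℤ)) * (j : ℤ) ^ φ
          + (α * (n : ℤ)) * (β * (n : ℤ)) := by ring
      _ = ((i : ℤ) ^ φ * (j : ℤ) ^ φ - 1) + (1 - (j : ℤ) ^ φ) * (i : ℤ) ^ φ
          + (1 - (i : ℤ) ^ φ) * (j : ℤ) ^ φ
          + (1 - (i : ℤ) ^ φ) * (1 - (j : ℤ) ^ φ) := by rw [e2, hα, hβ]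
      _ = 0 := by ring
  -- define v and compute u * v
  set v : MonoidAlgebra ℤ G := T ^ φ + β • ghat with hv
  have hu' : u = S ^ φ + α • ghat := by rw [hu]
  have hSφg : S ^ φ * ghat = ((i : ℤ) ^ φ) • ghat := by
    rw [(hcSg.pow_left φ).eq, hgSφ]
  have huv : u * v = 1 := by
    have expand : u * v
        = 1 + (c + β * (i : ℤ) ^ φ + α * (j : ℤ) ^ φ + α * β * (n : ℤ)) • ghat := by
      rw [hu', hv, add_mul, mul_add, mul_add, hSTφ, mul_smul_comm, hSφg,
        smul_mul_assoc, hgTφ, smul_mul_assoc, mul_smul_comm, hg_sq]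
      module
    rw [expand, hcoeff, zero_smul, add_zero]
  have hcuv : Commute u v := by
    rw [hu', hv]
    have h1 : Commute (S ^ φ) (T ^ φ) := hcST.pow_pow φ φ
    have h2 : Commute (S ^ φ) (β • ghat) := (hcSg.pow_left φ).smul_right β
    have h3 : Commute (α • ghat) (T ^ φ) := ((hcTg.pow_left φ).symm).smul_left α
    have h4 : Commute (α • ghat) (β • ghat) :=
      ((Commute.refl ghat).smul_left α).smul_right β
    exact Commute.add_left (h1.add_right h2) (h3.add_right h4)
  exact isUnit_iff_exists.2 ⟨v, huv, by rw [← hcuv.eq]; exact huv⟩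
end

section
/- Decryption correctness of the ElGamal type group ring public key cryptosystem: let S be an arbitrary ring, let u and v be units of S, let n₁, n₂, k be natural numbers, and let r ∈ S be a message. Set A₁ = u^{n₁}, A₂ = v^{n₂}, C₁ = v^{k}, and C₂ = (r * A₁) * A₂^{k}. Then (C₂ * ((C₁)^{n₂})⁻¹) * A₁⁻¹ = r, where the inverses are taken in the unit group of S. -/
theorem elgamal_grpkc_decryption_general {S : Type*} [Ring S]
    (v : Sˣ) (n₂ k : ℕ) (r : S)
    (A₁ A₂ C₁ : Sˣ) (hA₂ : A₂ = v ^ n₂) (hC₁ : C₁ = v ^ k)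
    (C₂ : S) (hC₂ : C₂ = (r * (A₁ : S)) * ((A₂ ^ k : Sˣ) : S)) :
    (C₂ * (((C₁ ^ n₂)⁻¹ : Sˣ) : S)) * ((A₁⁻¹ : Sˣ) : S) = r := by
  subst hC₂ hA₂ hC₁
  rw [pow_right_comm, Units.mul_inv_cancel_right, Units.mul_inv_cancel_right]

/-- Decryption correctness of the ElGamal type group ring
public key cryptosystem: let `S` be an arbitrary ring, let `u` and `v` be
units of `S`, let `n₁, n₂, k` be natural numbers, and let `r ∈ S` be a
message. Set `A₁ = u^{n₁}`, `A₂ = v^{n₂}`, `C₁ = v^{k}`, and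
`C₂ = (r * A₁) * A₂^{k}`. Then `(C₂ * ((C₁)^{n₂})⁻¹) * A₁⁻¹ = r`. -/
theorem elgamal_grpkc_decryption {S : Type*} [Ring S]
    (u v : Sˣ) (n₁ n₂ k : ℕ) (r : S)
    (A₁ A₂ C₁ : Sˣ) (hA₁ : A₁ = u ^ n₁) (hA₂ : A₂ = v ^ n₂) (hC₁ : C₁ = v ^ k)
    (C₂ : S) (hC₂ : C₂ = (r * (A₁ : S)) * ((A₂ ^ k : Sˣ) : S)) :
    (C₂ * (((C₁ ^ n₂)⁻¹ : Sˣ) : S)) * ((A₁⁻¹ : Sˣ) : S) = r :=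
  elgamal_grpkc_decryption_general v n₂ k r A₁ A₂ C₁ hA₂ hC₁ C₂ hC₂
end

section
/- In the integral group ring ℤ[D₁₀], where D₁₀ = ⟨r, s | r⁵ = s² = 1, sr = r⁴s⟩ is the dihedral group of order 10 (Mathlib: DihedralGroup 5), the element u = 1 − 2r − 2r² + r³ + 3r⁴ is a unit with inverse u⁻¹ = −2 + 3r − 2r² + r³ + r⁴; that is, u * (−2 + 3r − 2r² + r³ + r⁴) = 1 and (−2 + 3r − 2r² + r³ + r⁴) * u = 1. -/
open Polynomial in
/-- In the integral group ring `ℤ[D₁₀]`, where `D₁₀` is the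
dihedral group of order 10, the element `u = 1 − 2r − 2r² + r³ + 3r⁴` is a
unit with inverse `u⁻¹ = −2 + 3r − 2r² + r³ + r⁴`. -/
theorem unit_Z_D10
    (r : MonoidAlgebra ℤ (DihedralGroup 5))
    (hr : r = MonoidAlgebra.of ℤ (DihedralGroup 5) (DihedralGroup.r 1))
    (u v : MonoidAlgebra ℤ (DihedralGroup 5))
    (hu : u = 1 - 2 * r - 2 * r ^ 2 + r ^ 3 + 3 * r ^ 4)
    (hv : v = -2 + 3 * r - 2 * r ^ 2 + r ^ 3 + r ^ 4) :
    u * v = 1 ∧ v * u = 1 := by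
  have hg : (DihedralGroup.r 1 : DihedralGroup 5) ^ 5 = 1 := by decide
  have hr5 : r ^ 5 = 1 := by rw [hr, ← map_pow, hg, map_one]
  have key : ∀ a b c : Polynomial ℤ, a * b - 1 = c * (X ^ 5 - 1) →
      aeval r a * aeval r b = 1 := by
    intro a b c h
    have := congrArg (aeval r) h
    simp only [map_sub, map_mul, map_one, map_pow, aeval_X, hr5, sub_self,
      mul_zero] at this
    exact sub_eq_zero.mp this
  have hu' : u = aeval r (1 - 2 * X - 2 * X ^ 2 + X ^ 3 + 3 * X ^ 4 : Polynomial ℤ) := by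
    simp [hu, map_ofNat]
  have hv' : v = aeval r (-2 + 3 * X - 2 * X ^ 2 + X ^ 3 + X ^ 4 : Polynomial ℤ) := by
    simp [hv, map_ofNat]
  rw [hu', hv']
  constructor
  · exact key _ _ (3 - 7 * X + 4 * X ^ 2 + 3 * X ^ 3) (by ring)
  · exact key _ _ (3 - 7 * X + 4 * X ^ 2 + 3 * X ^ 3) (by ring)
end

section
/- In the integral group ring ℤ[C₈], where C₈ = ⟨x⟩ is the cyclic group of order 8, the unit u = 2 + x − x³ − x⁴ − x⁵ + x⁷ has infinite multiplicative order: u^m ≠ 1 for every positive integer m. -/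
/-!
Evaluate `ℤ[C₈]` at the primitive eighth root of unity `ζ = e^{πi/4}`. Since `ζ⁴ = -1`, the image
of `u` is `3 + 2(ζ - ζ³) = 3 + 2(ζ + ζ̄) = 3 + 2√2`, a complex number of absolute value greater
than `1`, so none of its positive powers is `1`, and neither is any positive power of `u`.
-/

open Complex Real

lemma unit_expr_eq_of_pow_four_eq_neg_one {A : Type*} [CommRing A] {ζ : A} (h : ζ ^ 4 = -1) :
    2 + ζ - ζ ^ 3 - ζ ^ 4 - ζ ^ 5 + ζ ^ 7 = 3 + 2 * (ζ - ζ ^ 3) := by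
  linear_combination (ζ ^ 3 - ζ - 1) * h

lemma ZMod.stdAddChar_one_eight : ZMod.stdAddChar (1 : ZMod 8) = √2 / 2 * (1 + I) := by
  have h := ZMod.stdAddChar_coe (N := 8) 1
  rw [Int.cast_one] at h
  rw [h, show 2 * π * I * ((1 : ℤ) : ℂ) / ((8 : ℕ) : ℂ) = (π / 4 : ℝ) * I by push_cast; ring,
    exp_mul_I, ← ofReal_cos, ← ofReal_sin, cos_pi_div_four, sin_pi_div_four]
  push_cast
  ring

lemma ZMod.stdAddChar_one_eight_sq : ZMod.stdAddChar (1 : ZMod 8) ^ 2 = I := by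
  have h2 : (√2 : ℂ) ^ 2 = 2 := by norm_cast; simp
  rw [ZMod.stdAddChar_one_eight]
  linear_combination (1 + I) ^ 2 / 4 * h2 + I_sq / 2

lemma ZMod.stdAddChar_one_eight_pow_four : ZMod.stdAddChar (1 : ZMod 8) ^ 4 = -1 := by
  rw [show 4 = 2 * 2 by rfl, pow_mul, ZMod.stdAddChar_one_eight_sq, I_sq]

lemma ZMod.stdAddChar_one_eight_sub_pow_three :
    ZMod.stdAddChar (1 : ZMod 8) - ZMod.stdAddChar (1 : ZMod 8) ^ 3 = √2 := by
  rw [pow_succ, ZMod.stdAddChar_one_eight_sq, ZMod.stdAddChar_one_eight]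
  linear_combination (-(√2 : ℂ) / 2) * I_sq

/-- In the integral group ring `ℤ[C₈]`, where `C₈ = ⟨x⟩` is
the cyclic group of order 8, the unit `u = 2 + x − x³ − x⁴ − x⁵ + x⁷` has
infinite multiplicative order: `u^m ≠ 1` for every positive integer `m`. -/
theorem unit_Z_C8_infinite_order
    (x : MonoidAlgebra ℤ (Multiplicative (ZMod 8)))
    (hx : x = MonoidAlgebra.of ℤ (Multiplicative (ZMod 8))
      (Multiplicative.ofAdd (1 : ZMod 8)))
    (u : MonoidAlgebra ℤ (Multiplicative (ZMod 8)))
    (hu : u = 2 + x - x ^ 3 - x ^ 4 - x ^ 5 + x ^ 7) :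
    ∀ m : ℕ, 0 < m → u ^ m ≠ 1 := by
  intro m hm hum
  let φ := MonoidAlgebra.lift ℤ ℂ (Multiplicative (ZMod 8)) ZMod.stdAddChar.toMonoidHom
  have hφx : φ x = ZMod.stdAddChar (1 : ZMod 8) := by
    rw [hx, MonoidAlgebra.lift_of]
    rfl
  have hφu : φ u = (3 + 2 * √2 : ℝ) := by
    simp only [hu, map_add, map_sub, map_pow, map_ofNat, hφx,
      unit_expr_eq_of_pow_four_eq_neg_one ZMod.stdAddChar_one_eight_pow_four,
      ZMod.stdAddChar_one_eight_sub_pow_three]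
    push_cast
    ring
  have hnorm : ‖φ u‖ = 1 :=
    norm_eq_one_of_pow_eq_one (by rw [← map_pow, hum, map_one]) hm.ne'
  rw [hφu, norm_real, Real.norm_of_nonneg (by positivity)] at hnorm
  linarith [sqrt_nonneg 2]
end

section
/- In the integral group ring ℤ[C₈], where C₈ = ⟨x⟩ is the cyclic group of order 8, the element v = 50 + 35x − 35x³ − 49x⁴ − 35x⁵ + 35x⁷ is a unit with inverse v⁻¹ = 50 − 35x + 35x³ − 49x⁴ + 35x⁵ − 35x⁷; that is, v * (50 − 35x + 35x³ − 49x⁴ + 35x⁵ − 35x⁷) = 1. -/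
/-- In the integral group ring `ℤ[C₈]`, where `C₈ = ⟨x⟩` is
the cyclic group of order 8, the element `v = 50 + 35x − 35x³ − 49x⁴ − 35x⁵ + 35x⁷`
is a unit with inverse `v⁻¹ = 50 − 35x + 35x³ − 49x⁴ + 35x⁵ − 35x⁷`. -/
theorem unit_Z_C8'
    (x : MonoidAlgebra ℤ (Multiplicative (ZMod 8)))
    (hx : x = MonoidAlgebra.of ℤ (Multiplicative (ZMod 8))
      (Multiplicative.ofAdd (1 : ZMod 8)))
    (v w : MonoidAlgebra ℤ (Multiplicative (ZMod 8)))
    (hv : v = 50 + 35 * x - 35 * x ^ 3 - 49 * x ^ 4 - 35 * x ^ 5 + 35 * x ^ 7)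
    (hw : w = 50 - 35 * x + 35 * x ^ 3 - 49 * x ^ 4 + 35 * x ^ 5 - 35 * x ^ 7) :
    v * w = 1 := by
  have h8 : x ^ 8 = 1 := by
    subst hx
    rw [← map_pow]
    norm_num
    rfl
  subst hv hw
  linear_combination (-2499 + 1225 * x ^ 2 + 2450 * x ^ 4 - 1225 * x ^ 6) * h8
end
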